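/- Let Y ⊆ X, let α : Y → R satisfy α y ≠ 0 for all y ∈ Y, and set g = Σ_{y∈Y} α y • ι y. Let β : X → R and set h = Σ_{x∈X} β x • ι x. Then ⁅g, h⁆ = 0 in L if and only if both of the following hold: (1) for every connected component C of the complement graph on Y there exist λ, μ ∈ R, not both zero, with λ * α y = μ * β y for all y ∈ C; and (2) for every z ∈ X \ Y with β z ≠ 0 and every y ∈ Y one has Adj z y. -/

import Mathlib

noncomputable section

/-- The Lie ideal of relations of the partially commutative Lie algebra:
it is generated by the brackets `⁅x, y⁆` of generators with `G.Adj x y`. -/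
def pcIdeal (R : Type*) [CommRing R] {X : Type*} (G : SimpleGraph X) :
    LieIdeal R (FreeLieAlgebra R X) :=
  LieSubmodule.lieSpan R (FreeLieAlgebra R X)
    {w | ∃ x y : X, G.Adj x y ∧ w = ⁅FreeLieAlgebra.of R x, FreeLieAlgebra.of R y⁆}

/-- The partially commutative Lie algebra `L_R(X; G)`. -/
abbrev PCLieAlgebra (R : Type*) [CommRing R] (X : Type*) (G : SimpleGraph X) :=
  FreeLieAlgebra R X ⧸ pcIdeal R G

/-- The canonical image `ι x` of a generator `x : X` in `L_R(X; G)`. -/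
def pcGen (R : Type*) [CommRing R] {X : Type*} (G : SimpleGraph X) (x : X) :
    PCLieAlgebra R X G :=
  LieSubmodule.Quotient.mk (N := pcIdeal R G) (FreeLieAlgebra.of R x)

/-- The Lie `R`-subalgebra `⟨Y⟩` of `L_R(X; G)` generated by `{ι y : y ∈ Y}`. -/
def genSpan (R : Type*) [CommRing R] {X : Type*} (G : SimpleGraph X) (Y : Set X) :
    LieSubalgebra R (PCLieAlgebra R X G) :=
  LieSubalgebra.lieSpan R (PCLieAlgebra R X G) (pcGen R G '' Y)

/-- The complement graph on a subset `Y ⊆ X`: distinct vertices of `Y` are adjacent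
iff they are not adjacent in `G`. -/
def complOn {X : Type*} (G : SimpleGraph X) (Y : Set X) : SimpleGraph Y where
  Adj a b := (a : X) ≠ (b : X) ∧ ¬ G.Adj a b
  symm := ⟨fun _ _ h => ⟨fun e => h.1 e.symm, fun e => h.2 e.symm⟩⟩
  loopless := ⟨fun _ h => h.1 rfl⟩

/-- The vertex set (as a subset of `X`) of a connected component of the
complement graph on `Y`. -/
def compSet {X : Type*} (G : SimpleGraph X) (Y : Set X)
    (c : (complOn G Y).ConnectedComponent) : Set X :=
  {x : X | ∃ hx : x ∈ Y, (complOn G Y).connectedComponentMk ⟨x, hx⟩ = c}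

/-- `Y` is the support of `g`: `g ∈ ⟨Y⟩`, and `Y ⊆ Z` whenever `g ∈ ⟨Z⟩`. -/
def isSupport (R : Type*) [CommRing R] {X : Type*} (G : SimpleGraph X)
    (g : PCLieAlgebra R X G) (Y : Set X) : Prop :=
  g ∈ genSpan R G Y ∧ ∀ Z : Set X, g ∈ genSpan R G Z → Y ⊆ Z

/-!
Expanding the bracket, `⁅Σ a x • ι x, Σ b x • ι x⁆ = Σ (a x * b y) • ⁅ι x, ι y⁆`, and pairing the
terms `(x, y)` and `(y, x)` shows that it vanishes as soon as `a x * b y = a y * b x` for every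
non-adjacent pair. Conversely, for non-adjacent `u, v`, sending `u ↦ E₀₁`, `v ↦ E₁₂` and every other
generator to `0` kills the defining relations, hence induces a Lie algebra map from `L` to the
Heisenberg algebra of `3 × 3` matrices under which the bracket becomes `(a u * b v - a v * b u) • E₀₂`.
So `⁅g, h⁆ = 0` exactly when the `2 × 2` minors of the coefficients vanish on non-edges. For `z ∉ Y`
the minor at `(y, z)` is `α y * β z`; inside `Y`, as `α` has no zeros, vanishing minors propagate
along paths of the complement graph, which is proportionality on its components.
-/

theorem Finset.sum_sum_eq_zero_of_antisymm {ι M : Type*} [AddCommMonoid M] (s : Finset ι)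
    (f : ι → ι → M) (hf : ∀ i j, f i j + f j i = 0) (hdiag : ∀ i, f i i = 0) :
    ∑ i ∈ s, ∑ j ∈ s, f i j = 0 := by
  rw [← Finset.sum_product']
  refine Finset.sum_involution (fun p _ => p.swap) (fun p _ => hf p.1 p.2) ?_
    (fun p hp => Finset.mem_product.2 (Finset.mem_product.1 hp).symm) (fun p _ => p.swap_swap)
  rintro ⟨i, j⟩ - hne heq
  obtain rfl : j = i := congrArg Prod.fst heq
  exact hne (hdiag j)

section Lift

variable (R : Type*) [CommRing R] {X : Type*} {G : SimpleGraph X}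
  {L : Type*} [LieRing L] [LieAlgebra R L]

lemma pcIdeal_le_ker_lift (f : X → L) (hf : ∀ x y, G.Adj x y → ⁅f x, f y⁆ = 0) :
    pcIdeal R G ≤ (FreeLieAlgebra.lift R f).ker := by
  rw [pcIdeal, LieSubmodule.lieSpan_le]
  rintro _ ⟨x, y, hxy, rfl⟩
  simp [hf x y hxy]

def pcLift (f : X → L) (hf : ∀ x y, G.Adj x y → ⁅f x, f y⁆ = 0) :
    PCLieAlgebra R X G →ₗ⁅R⁆ L :=
  { (pcIdeal R G).toSubmodule.liftQ (FreeLieAlgebra.lift R f).toLinearMap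
      (pcIdeal_le_ker_lift R f hf) with
    map_lie' := by
      rintro ⟨a⟩ ⟨b⟩
      exact (FreeLieAlgebra.lift R f).map_lie a b }

@[simp]
lemma pcLift_pcGen (f : X → L) (hf : ∀ x y, G.Adj x y → ⁅f x, f y⁆ = 0) (x : X) :
    pcLift R f hf (pcGen R G x) = f x :=
  FreeLieAlgebra.lift_of_apply f x

lemma pcGen_lie_pcGen_of_adj {x y : X} (h : G.Adj x y) : ⁅pcGen R G x, pcGen R G y⁆ = 0 := by
  rw [pcGen, pcGen, ← LieSubmodule.Quotient.mk_bracket, LieSubmodule.Quotient.mk_eq_zero']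
  exact LieSubmodule.subset_lieSpan ⟨x, y, h, rfl⟩

end Lift

section Heisenberg

attribute [local instance] LieRing.ofAssociativeRing

open Matrix

variable {R : Type*} [CommRing R] {X : Type*}

variable (R) in
def heisenbergGen [DecidableEq X] (u v x : X) : Matrix (Fin 3) (Fin 3) R :=
  single 0 1 (if x = u then 1 else 0) + single 1 2 (if x = v then 1 else 0)

lemma sum_smul_heisenbergGen [DecidableEq X] [Fintype X] (u v : X) (a : X → R) :
    ∑ x, a x • heisenbergGen R u v x = single 0 1 (a u) + single 1 2 (a v) := by
  ext i j
  fin_cases i <;> fin_cases j <;> simp [heisenbergGen, Matrix.sum_apply]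

lemma lie_single_add_single_fin_three (p q r s : R) :
    ⁅(single 0 1 p + single 1 2 q : Matrix (Fin 3) (Fin 3) R),
      (single 0 1 r + single 1 2 s : Matrix (Fin 3) (Fin 3) R)⁆ =
      single 0 2 (p * s - q * r) := by
  simp only [Ring.lie_def, mul_add, add_mul, ne_eq, one_ne_zero, not_false_eq_true,
    single_mul_single_of_ne, Fin.reduceEq, add_zero, single_mul_single_same, zero_add]
  rw [mul_comm r q]
  exact (map_sub (singleAddMonoidHom (α := R) (0 : Fin 3) (2 : Fin 3)) _ _).symm

lemma heisenbergGen_lie_eq_zero [DecidableEq X] {G : SimpleGraph X} {u v : X}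
    (huv : ¬ G.Adj u v) {x y : X} (hxy : G.Adj x y) :
    ⁅heisenbergGen R u v x, heisenbergGen R u v y⁆ = 0 := by
  have hzero : ∀ z, z ≠ u → z ≠ v → heisenbergGen R u v z = 0 := fun z hu hv => by
    simp [heisenbergGen, hu, hv]
  by_cases hx : x = u ∨ x = v
  · by_cases hy : y = u ∨ y = v
    -- then `{x, y} = {u, v}`, so `x` and `y` cannot be adjacent
    · rcases hx with rfl | rfl <;> rcases hy with rfl | rfl <;>
        first | exact absurd rfl hxy.ne | exact absurd hxy huv | exact absurd hxy.symm huv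
    · rw [not_or] at hy
      simp [hzero y hy.1 hy.2, Ring.lie_def]
  · rw [not_or] at hx
    simp [hzero x hx.1 hx.2, Ring.lie_def]

theorem lie_sum_smul_pcGen_eq_zero_iff {G : SimpleGraph X} [Fintype X] (a b : X → R) :
    ⁅∑ x, a x • pcGen R G x, ∑ x, b x • pcGen R G x⁆ = 0 ↔
      ∀ x y, ¬ G.Adj x y → a x * b y = a y * b x := by
  classical
  constructor
  · intro h u v huv
    have := congrArg (pcLift R (heisenbergGen R u v) fun _ _ => heisenbergGen_lie_eq_zero huv) h
    simp only [LieHom.map_lie, map_sum, map_smul, pcLift_pcGen, sum_smul_heisenbergGen,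
      lie_single_add_single_fin_three, map_zero] at this
    exact sub_eq_zero.1 (by simpa using congrFun (congrFun this 0) 2)
  · intro h
    rw [sum_lie_sum]
    simp_rw [smul_lie, lie_smul, smul_smul]
    refine Finset.sum_sum_eq_zero_of_antisymm _ _ (fun x y => ?_) (fun x => by simp)
    by_cases hxy : G.Adj x y
    · simp [pcGen_lie_pcGen_of_adj R hxy, pcGen_lie_pcGen_of_adj R hxy.symm]
    · rw [h x y hxy, ← lie_skew, smul_neg, neg_add_cancel]

end Heisenberg

section Proportional

variable {R : Type*} [CommRing R] [IsDomain R]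

lemma mul_eq_mul_trans {a b c a' b' c' : R} (hb : b ≠ 0) (h₁ : a * b' = b * a')
    (h₂ : b * c' = c * b') : a * c' = c * a' :=
  mul_left_cancel₀ hb (by linear_combination c * h₁ + a * h₂)

variable {V : Type*} {H : SimpleGraph V} {α β : V → R}

lemma SimpleGraph.Reachable.mul_eq_mul (hα : ∀ v, α v ≠ 0)
    (hadj : ∀ u v, H.Adj u v → α u * β v = α v * β u) {u v : V} (h : H.Reachable u v) :
    α u * β v = α v * β u := by
  rw [SimpleGraph.reachable_iff_reflTransGen] at h
  induction h with
  | refl => rfl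
  | tail _ hvw ih => exact mul_eq_mul_trans (hα _) ih (hadj _ _ hvw)

theorem SimpleGraph.forall_adj_mul_eq_mul_iff (hα : ∀ v, α v ≠ 0) :
    (∀ u v, H.Adj u v → α u * β v = α v * β u) ↔
      ∀ c : H.ConnectedComponent, ∃ lam mu : R, ¬(lam = 0 ∧ mu = 0) ∧
        ∀ v, H.connectedComponentMk v = c → lam * α v = mu * β v := by
  constructor
  · intro hadj c
    obtain ⟨u, rfl⟩ := c.exists_rep
    refine ⟨β u, α u, fun h => hα u h.2, fun v hv => ?_⟩
    linear_combination -(SimpleGraph.ConnectedComponent.exact hv.symm).mul_eq_mul hα hadj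
  · intro h u v huv
    obtain ⟨lam, mu, hne, hprop⟩ := h (H.connectedComponentMk u)
    have hu := hprop u rfl
    have hv := hprop v (SimpleGraph.ConnectedComponent.connectedComponentMk_eq_of_adj huv).symm
    have hmu : mu ≠ 0 := by
      rintro rfl
      refine hne ⟨?_, rfl⟩
      simpa [hα u] using hu
    exact mul_left_cancel₀ hmu (by linear_combination α v * hu - α u * hv)

end Proportional

section Extension

variable {R : Type*} [CommRing R] [IsDomain R] {X : Type*} {G : SimpleGraph X} {Y : Finset X}
  {α β : X → R}

lemma forall_not_adj_indicator_mul_eq_iff (hα : ∀ y ∈ Y, α y ≠ 0) :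
    (∀ x y, ¬ G.Adj x y → (Y : Set X).indicator α x * β y = (Y : Set X).indicator α y * β x) ↔
      (∀ u v : (Y : Set X), (complOn G Y).Adj u v → α u * β v = α v * β u) ∧
        ∀ z, z ∉ Y → β z ≠ 0 → ∀ y ∈ Y, G.Adj z y := by
  constructor
  · intro h
    refine ⟨fun u v huv => by simpa using h u v huv.2, fun z hz hβ y hy => ?_⟩
    by_contra hzy
    have := h y z fun h' => hzy h'.symm
    simp only [Set.indicator_of_mem (Finset.mem_coe.2 hy),
      Set.indicator_of_notMem (Finset.mem_coe.not.2 hz), zero_mul] at this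
    exact mul_ne_zero (hα y hy) hβ this
  · rintro ⟨h1, h2⟩ x y hxy
    by_cases hx : x ∈ Y <;> by_cases hy : y ∈ Y
    · obtain rfl | hne := eq_or_ne x y
      · rfl
      · simpa [hx, hy] using h1 ⟨x, hx⟩ ⟨y, hy⟩ ⟨hne, hxy⟩
    · have : β y = 0 := by_contra fun hβ => hxy (h2 y hy hβ x hx).symm
      simp [hx, hy, this]
    · have : β x = 0 := by_contra fun hβ => hxy (h2 x hx hβ y hy)
      simp [hx, hy, this]
    · simp [hx, hy]

end Extension

/-- Characterization of the linear combinations of generators commuting with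
`g = Σ_{y ∈ Y} α y • ι y` (all `α y ≠ 0`): `⁅g, h⁆ = 0` for `h = Σ_{x ∈ X} β x • ι x`
iff on each connected component of the complement graph on `Y` the coefficients of `h`
are proportional to those of `g`, and every generator outside `Y` occurring in `h`
with a nonzero coefficient is adjacent to all of `Y`. -/
theorem bracket_lin_comb_eq_zero_iff
    (R : Type*) [CommRing R] [IsDomain R] (X : Type*) [Fintype X] (G : SimpleGraph X)
    (Y : Finset X) (α β : X → R) (hα : ∀ y ∈ Y, α y ≠ 0) :
    ⁅∑ y ∈ Y, α y • pcGen R G y, ∑ x : X, β x • pcGen R G x⁆ = 0 ↔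
      ((∀ c : (complOn G (Y : Set X)).ConnectedComponent,
          ∃ lam mu : R, ¬(lam = 0 ∧ mu = 0) ∧
            ∀ y : (Y : Set X), (complOn G (Y : Set X)).connectedComponentMk y = c →
              lam * α y = mu * β y) ∧
        (∀ z : X, z ∉ Y → β z ≠ 0 → ∀ y ∈ Y, G.Adj z y)) := by
  have hg : ∑ y ∈ Y, α y • pcGen R G y = ∑ x, (Y : Set X).indicator α x • pcGen R G x := by
    rw [← Finset.sum_indicator_subset _ (Finset.subset_univ Y)]
    simp only [Set.indicator_smul_apply_left]
  rw [hg, lie_sum_smul_pcGen_eq_zero_iff, forall_not_adj_indicator_mul_eq_iff hα,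
    SimpleGraph.forall_adj_mul_eq_mul_iff fun y : (Y : Set X) => hα y y.2]
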